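/- Let τ ≥ 0 be an integer and 0 ≤ a ≤ 1. Every real root λ of the polynomial λ^{τ+2} − λ^{τ+1} + aλ = 0 satisfies |λ| ≤ 1. -/
import Mathlib


/-- Every real root of `λ^{τ+2} - λ^{τ+1} + aλ = 0` with `0 ≤ a ≤ 1` satisfies
`|λ| ≤ 1`. -/
theorem stmt12 (τ : ℕ) (a lam : ℝ) (ha0 : 0 ≤ a) (ha1 : a ≤ 1)
    (h : lam ^ (τ + 2) - lam ^ (τ + 1) + a * lam = 0) : |lam| ≤ 1 := by
  by_contra hc
  push_neg at hc
  have hne : lam ≠ 0 := by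
    intro h0; rw [h0] at hc; simp at hc; linarith
  have hfac : lam * (lam ^ (τ + 1) - lam ^ τ + a) = 0 := by
    linear_combination h
  have hmid : lam ^ (τ + 1) - lam ^ τ + a = 0 :=
    (mul_eq_zero.mp hfac).resolve_left hne
  have hkey : lam ^ τ * (lam - 1) = -a := by linear_combination hmid
  have hsq : 1 ≤ lam ^ 2 := by
    nlinarith [sq_abs lam, hc, abs_nonneg lam]
  have hbsq : 1 ≤ (lam ^ τ) ^ 2 := by
    calc (1:ℝ) ≤ (lam ^ 2) ^ τ := one_le_pow₀ hsq
    _ = (lam ^ τ) ^ 2 := by ring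
  rcases lt_or_gt_of_ne hne with hneg | hpos
  · have hlt : lam < -1 := by
      rcases lt_abs.mp hc with h1 | h2 <;> linarith
    nlinarith [hkey, hbsq, sq_nonneg (lam ^ τ)]
  · have hgt : 1 < lam := by
      rcases lt_abs.mp hc with h1 | h2 <;> linarith
    have hpow : 1 ≤ lam ^ τ := one_le_pow₀ hgt.le
    nlinarith [hkey]
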